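/- arXiv:0810.3259 — 6 statements merged into one kernel-verified Lean document; each statement's English description precedes it below -/
import Mathlib

section
/- Let G be a group containing a central element g of infinite order such that the cyclic subgroup ⟨g⟩ generated by g has finite index in G. Then for every representation W of G on a ℚ-vector space and every integer q ≥ 2, the group cohomology H^q(G, W) is zero. -/
open CategoryTheory CategoryTheory.Limits ZeroObject

noncomputable section

namespace Stmt0Proof

variable {G : Type} [Group G] (g : G)

def f1 : (G →₀ ℚ) →ₗ[ℚ] (G →₀ ℚ) :=
  Finsupp.lmapDomain ℚ ℚ (· * g) - LinearMap.id

def f0 : (G →₀ ℚ) →ₗ[ℚ] ((G ⧸ Subgroup.zpowers g) →₀ ℚ) :=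
  Finsupp.lmapDomain ℚ ℚ QuotientGroup.mk

lemma f1_single (a : G) (r : ℚ) :
    f1 g (Finsupp.single a r) = Finsupp.single (a * g) r - Finsupp.single a r := by
  simp [f1, Finsupp.mapDomain_single]

lemma f0_single (a : G) (r : ℚ) :
    f0 g (Finsupp.single a r) = Finsupp.single (QuotientGroup.mk a) r := by
  simp [f0, Finsupp.mapDomain_single]

/-- the representation morphism `φ : ℚ[G] ⟶ ℚ[G]`. -/
def φ : Rep.ofMulAction ℚ G G ⟶ Rep.ofMulAction ℚ G G :=
  Rep.ofHom ⟨(MonoidAlgebra.coeffLinearEquiv ℚ).symm.toLinearMap ∘ₗ f1 g ∘ₗ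
    (MonoidAlgebra.coeffLinearEquiv ℚ).toLinearMap, fun s => by
    have key : (f1 g).comp (Finsupp.lmapDomain ℚ ℚ (fun x => s * x))
        = (Finsupp.lmapDomain ℚ ℚ (fun x => s * x)).comp (f1 g) := by
      refine Finsupp.lhom_ext fun a r => ?_
      show f1 g (Finsupp.mapDomain (fun x => (show G from s) * x) (Finsupp.single a r))
          = Finsupp.mapDomain (fun x => (show G from s) * x) (f1 g (Finsupp.single a r))
      rw [Finsupp.mapDomain_single, f1_single, f1_single, ← Finsupp.lmapDomain_apply ℚ ℚ, map_sub, Finsupp.lmapDomain_apply,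
        Finsupp.lmapDomain_apply, Finsupp.mapDomain_single, Finsupp.mapDomain_single, mul_assoc]
    refine LinearMap.ext fun x => ?_
    show (MonoidAlgebra.coeffLinearEquiv ℚ).symm (f1 g (Finsupp.lmapDomain ℚ ℚ (fun x => s * x)
        (MonoidAlgebra.coeffLinearEquiv ℚ x))) = (MonoidAlgebra.coeffLinearEquiv ℚ).symm
        (Finsupp.lmapDomain ℚ ℚ (fun x => s * x) (f1 g (MonoidAlgebra.coeffLinearEquiv ℚ x)))
    rw [← LinearMap.comp_apply, key, LinearMap.comp_apply]⟩

def π0 : Rep.ofMulAction ℚ G G ⟶ Rep.ofMulAction ℚ G (G ⧸ Subgroup.zpowers g) :=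
  Rep.ofHom ⟨(MonoidAlgebra.coeffLinearEquiv ℚ).symm.toLinearMap ∘ₗ f0 g ∘ₗ
    (MonoidAlgebra.coeffLinearEquiv ℚ).toLinearMap, fun s => by
    have key : (f0 g).comp (Finsupp.lmapDomain ℚ ℚ (fun x => s * x))
        = (Finsupp.lmapDomain ℚ ℚ (fun x : G ⧸ Subgroup.zpowers g => s • x)).comp (f0 g) := by
      refine Finsupp.lhom_ext fun a r => ?_
      show f0 g (Finsupp.mapDomain (fun x => (show G from s) * x) (Finsupp.single a r))
          = Finsupp.mapDomain (fun x => (show G from s) • x) (f0 g (Finsupp.single a r))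
      rw [Finsupp.mapDomain_single, f0_single, f0_single, Finsupp.mapDomain_single]
      rfl
    refine LinearMap.ext fun x => ?_
    show (MonoidAlgebra.coeffLinearEquiv ℚ).symm (f0 g (Finsupp.lmapDomain ℚ ℚ (fun x => s * x)
        (MonoidAlgebra.coeffLinearEquiv ℚ x))) = (MonoidAlgebra.coeffLinearEquiv ℚ).symm
        (Finsupp.lmapDomain ℚ ℚ (fun x : G ⧸ Subgroup.zpowers g => s • x)
          (f0 g (MonoidAlgebra.coeffLinearEquiv ℚ x)))
    rw [← LinearMap.comp_apply, key, LinearMap.comp_apply]⟩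


lemma f1_injective (hord : ¬ IsOfFinOrder g) : Function.Injective (f1 g) := by
  rw [← LinearMap.ker_eq_bot, LinearMap.ker_eq_bot']
  intro x hx
  by_contra hne
  -- x satisfies mapDomain (·*g) x = x
  have hfix : Finsupp.mapDomain (· * g) x = x := by
    have : Finsupp.mapDomain (· * g) x - x = 0 := hx
    have := sub_eq_zero.1 this
    simpa using this
  obtain ⟨a, ha⟩ := Finsupp.support_nonempty_iff.2 hne
  have key : ∀ k : ℕ, x (a * g ^ k) = x a := by
    intro k
    induction k with
    | zero => simp
    | succ k ih =>
      have : x (a * g ^ k * g) = x (a * g ^ k) := by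
        conv_lhs => rw [← hfix]
        rw [Finsupp.mapDomain_apply (mul_left_injective g)]
      rw [pow_succ, ← mul_assoc, this, ih]
  have hmem : ∀ k : ℕ, a * g ^ k ∈ x.support := by
    intro k
    rw [Finsupp.mem_support_iff, key]
    exact Finsupp.mem_support_iff.1 ha
  have hinj : Function.Injective (fun k : ℕ => a * g ^ k) := by
    intro k l hkl
    exact injective_pow_iff_not_isOfFinOrder.2 hord (mul_left_cancel hkl)
  exact (Set.infinite_of_injective_forall_mem hinj (fun k => hmem k))
    x.support.finite_toSet

lemma f0_surjective : Function.Surjective (f0 g) := by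
  intro y
  induction y using Finsupp.induction_linear with
  | zero => exact ⟨0, map_zero _⟩
  | add a b ha hb =>
    obtain ⟨xa, hxa⟩ := ha; obtain ⟨xb, hxb⟩ := hb
    exact ⟨xa + xb, by rw [map_add, hxa, hxb]⟩
  | single c r =>
    refine ⟨Finsupp.single c.out r, ?_⟩
    rw [f0_single, QuotientGroup.out_eq']

lemma comp_zero' : (f0 g).comp (f1 g) = 0 := by
  refine Finsupp.lhom_ext fun a r => ?_
  rw [LinearMap.comp_apply, f1_single, map_sub, f0_single, f0_single]
  have : (QuotientGroup.mk (a * g) : G ⧸ Subgroup.zpowers g) = QuotientGroup.mk a :=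
    QuotientGroup.mk_mul_of_mem a (Subgroup.mem_zpowers g)
  rw [this]
  simp

lemma diff_mem (b : G) (k : ℤ) (r : ℚ) :
    Finsupp.single (b * g ^ k) r - Finsupp.single b r ∈ LinearMap.range (f1 g) := by
  induction k using Int.induction_on with
  | zero => simp
  | succ k ih =>
    have : Finsupp.single (b * g ^ ((k : ℤ) + 1)) r - Finsupp.single b r
        = f1 g (Finsupp.single (b * g ^ (k : ℤ)) r)
          + (Finsupp.single (b * g ^ (k : ℤ)) r - Finsupp.single b r) := by
      rw [f1_single, zpow_add_one, ← mul_assoc]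
      abel
    rw [this]
    exact add_mem (LinearMap.mem_range_self _ _) ih
  | pred k ih =>
    have : Finsupp.single (b * g ^ (-(k : ℤ) - 1)) r - Finsupp.single b r
        = -(f1 g (Finsupp.single (b * g ^ (-(k : ℤ) - 1)) r))
          + (Finsupp.single (b * g ^ (-(k : ℤ))) r - Finsupp.single b r) := by
      rw [f1_single]
      have : b * g ^ (-(k : ℤ) - 1) * g = b * g ^ (-(k : ℤ)) := by
        rw [mul_assoc, ← zpow_add_one, sub_add_cancel]
      rw [this]
      abel
    rw [this]
    exact add_mem (neg_mem (LinearMap.mem_range_self _ _)) ih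

lemma ker_le_range : LinearMap.ker (f0 g) ≤ LinearMap.range (f1 g) := by
  intro x hx
  set u : (G →₀ ℚ) →ₗ[ℚ] (G →₀ ℚ) :=
    LinearMap.id - Finsupp.lmapDomain ℚ ℚ
      (fun a : G => ((QuotientGroup.mk a : G ⧸ Subgroup.zpowers g)).out) with hu
  have hux : ∀ y : G →₀ ℚ, u y ∈ LinearMap.range (f1 g) := by
    intro y
    induction y using Finsupp.induction_linear with
    | zero => rw [map_zero]; exact zero_mem _
    | add a b ha hb => rw [map_add]; exact add_mem ha hb
    | single a r =>
      have : u (Finsupp.single a r)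
          = Finsupp.single a r
            - Finsupp.single ((QuotientGroup.mk a : G ⧸ Subgroup.zpowers g)).out r := by
        simp [hu, Finsupp.mapDomain_single]
      rw [this]
      set b := ((QuotientGroup.mk a : G ⧸ Subgroup.zpowers g)).out with hb
      have hba : (QuotientGroup.mk b : G ⧸ Subgroup.zpowers g) = QuotientGroup.mk a := by
        rw [hb]; exact QuotientGroup.out_eq' _
      obtain ⟨k, hk⟩ : b⁻¹ * a ∈ Subgroup.zpowers g := by
        rw [← QuotientGroup.eq]; exact hba
      simp only [] at hk
      have ha2 : a = b * g ^ k := by rw [hk, mul_inv_cancel_left]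
      rw [ha2]
      exact diff_mem g b k r
  have : x = u x := by
    have h2 : Finsupp.mapDomain
        (fun a : G => ((QuotientGroup.mk a : G ⧸ Subgroup.zpowers g)).out) x
        = Finsupp.mapDomain Quotient.out (f0 g x) := by
      rw [show f0 g x = Finsupp.mapDomain QuotientGroup.mk x from rfl,
        ← Finsupp.mapDomain_comp]
      rfl
    have h3 : f0 g x = 0 := hx
    rw [hu]
    simp only [LinearMap.sub_apply, LinearMap.id_apply, Finsupp.lmapDomain_apply]
    rw [h2, h3]
    simp
  rw [this]
  exact hux x

section Splitting

variable [Fintype (G ⧸ Subgroup.zpowers g)]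

def vv : (G ⧸ Subgroup.zpowers g) →₀ ℚ :=
  ∑ c : G ⧸ Subgroup.zpowers g, Finsupp.single c 1

lemma vv_invariant (s : G) :
    Finsupp.mapDomain (fun c : G ⧸ Subgroup.zpowers g => s • c) (vv g) = vv g := by
  rw [vv, ← Finsupp.lmapDomain_apply ℚ ℚ, map_sum]
  simp only [Finsupp.lmapDomain_apply, Finsupp.mapDomain_single]
  exact Equiv.sum_comp (MulAction.toPerm s)
    (fun c : G ⧸ Subgroup.zpowers g => Finsupp.single c 1)

def σhom : ((G ⧸ Subgroup.zpowers g) →₀ ℚ) →ₗ[ℚ] ℚ :=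
  Finsupp.linearCombination ℚ (fun _ => (1 : ℚ))

lemma σhom_single (c : G ⧸ Subgroup.zpowers g) (r : ℚ) :
    σhom g (Finsupp.single c r) = r := by
  simp [σhom]

lemma σhom_vv :
    σhom g (vv g) = (Nat.card (G ⧸ Subgroup.zpowers g) : ℚ) := by
  rw [vv, map_sum]
  simp [σhom_single, Nat.card_eq_fintype_card]

def ιr : Rep.trivial ℚ G ℚ ⟶ Rep.ofMulAction ℚ G (G ⧸ Subgroup.zpowers g) :=
  Rep.ofHom ⟨LinearMap.toSpanSingleton ℚ _
    ((MonoidAlgebra.coeffLinearEquiv ℚ).symm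
      ((Nat.card (G ⧸ Subgroup.zpowers g) : ℚ)⁻¹ • vv g)), fun s => by
    refine LinearMap.ext_ring ?_
    show LinearMap.toSpanSingleton ℚ _ _ ((1:ℚ)) =
      (MonoidAlgebra.coeffLinearEquiv ℚ).symm (Finsupp.mapDomain (fun c => (show G from s) • c)
        ((MonoidAlgebra.coeffLinearEquiv ℚ) (LinearMap.toSpanSingleton ℚ _ _ (1:ℚ))))
    simp only [LinearMap.toSpanSingleton_apply, one_smul, LinearEquiv.apply_symm_apply]
    rw [Finsupp.mapDomain_smul, vv_invariant, map_smul]⟩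

def σr : Rep.ofMulAction ℚ G (G ⧸ Subgroup.zpowers g) ⟶ Rep.trivial ℚ G ℚ :=
  Rep.ofHom ⟨σhom g ∘ₗ (MonoidAlgebra.coeffLinearEquiv ℚ).toLinearMap, fun s => by
    have key : (σhom g).comp (Finsupp.lmapDomain ℚ ℚ (fun c : G ⧸ Subgroup.zpowers g => s • c))
        = σhom g := by
      refine Finsupp.lhom_ext fun c r => ?_
      show σhom g (Finsupp.mapDomain (fun c => (show G from s) • c) (Finsupp.single c r))
        = σhom g (Finsupp.single c r)
      rw [Finsupp.mapDomain_single, σhom_single, σhom_single]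
    refine LinearMap.ext fun x => ?_
    show σhom g (Finsupp.lmapDomain ℚ ℚ (fun c : G ⧸ Subgroup.zpowers g => s • c)
        (MonoidAlgebra.coeffLinearEquiv ℚ x)) = σhom g (MonoidAlgebra.coeffLinearEquiv ℚ x)
    rw [← LinearMap.comp_apply, key]⟩

lemma ισ : ιr g ≫ σr g = 𝟙 (Rep.trivial ℚ G ℚ) := by
  ext1
  apply Representation.IntertwiningMap.ext
  refine LinearMap.ext_ring ?_
  show σhom g ((MonoidAlgebra.coeffLinearEquiv ℚ) ((LinearMap.toSpanSingleton ℚ _ _) (1:ℚ))) = 1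
  rw [LinearMap.toSpanSingleton_apply, one_smul, LinearEquiv.apply_symm_apply, map_smul, σhom_vv, smul_eq_mul]
  rw [inv_mul_cancel₀]
  exact_mod_cast Nat.card_ne_zero.2 ⟨inferInstance, Finite.of_fintype _⟩

end Splitting


section RepLevel

lemma epi_surj {A B : Rep ℚ G} (e : A ⟶ B) [Epi e] : Function.Surjective e.hom := by
  have : Epi ((forget₂ (Rep ℚ G) (ModuleCat ℚ)).map e) :=
    (forget₂ (Rep ℚ G) (ModuleCat ℚ)).map_epi e
  rwa [ModuleCat.epi_iff_surjective] at this

instance leftRegular_projective : Projective (Rep.ofMulAction ℚ G G) :=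
  Rep.leftRegular_projective

lemma zero_projective : Projective (0 : Rep ℚ G) where
  factors {E X} f e he := ⟨0, (isZero_zero _).eq_of_src _ _⟩

variable (hord : ¬ IsOfFinOrder g)

lemma mono_φ (hord : ¬ IsOfFinOrder g) : Mono (φ g) := by
  apply (forget₂ (Rep ℚ G) (ModuleCat ℚ)).mono_of_mono_map
  rw [ModuleCat.mono_iff_injective]
  exact (MonoidAlgebra.coeffLinearEquiv ℚ).symm.injective.comp
    ((f1_injective g hord).comp (MonoidAlgebra.coeffLinearEquiv ℚ).injective)

lemma epi_π0 : Epi (π0 g) := by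
  apply (forget₂ (Rep ℚ G) (ModuleCat ℚ)).epi_of_epi_map
  rw [ModuleCat.epi_iff_surjective]
  exact (MonoidAlgebra.coeffLinearEquiv ℚ).symm.surjective.comp
    ((f0_surjective g).comp (MonoidAlgebra.coeffLinearEquiv ℚ).surjective)

lemma φ_π0_zero : φ g ≫ π0 g = 0 := by
  ext1
  apply Representation.IntertwiningMap.ext
  refine LinearMap.ext fun x => ?_
  show (MonoidAlgebra.coeffLinearEquiv ℚ).symm (f0 g ((MonoidAlgebra.coeffLinearEquiv ℚ)
    ((MonoidAlgebra.coeffLinearEquiv ℚ).symm (f1 g (MonoidAlgebra.coeffLinearEquiv ℚ x))))) = 0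
  rw [LinearEquiv.apply_symm_apply, ← LinearMap.comp_apply (f0 g), comp_zero' g]
  simp

lemma exact_φ_π0 : (ShortComplex.mk (φ g) (π0 g) (φ_π0_zero g)).Exact := by
  rw [← ShortComplex.exact_map_iff_of_faithful _ (forget₂ (Rep ℚ G) (ModuleCat ℚ))]
  rw [ShortComplex.moduleCat_exact_iff_range_eq_ker]
  apply le_antisymm
  · rintro x ⟨y, rfl⟩
    show (MonoidAlgebra.coeffLinearEquiv ℚ).symm (f0 g ((MonoidAlgebra.coeffLinearEquiv ℚ)
      ((MonoidAlgebra.coeffLinearEquiv ℚ).symm (f1 g (MonoidAlgebra.coeffLinearEquiv ℚ y))))) = 0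
    rw [LinearEquiv.apply_symm_apply, ← LinearMap.comp_apply (f0 g), comp_zero' g]
    simp
  · intro x hx
    have hx' : f0 g (MonoidAlgebra.coeffLinearEquiv ℚ x) = 0 :=
      (MonoidAlgebra.coeffLinearEquiv ℚ).symm.injective (by rw [map_zero]; exact hx)
    obtain ⟨y, hy⟩ := ker_le_range g hx'
    refine ⟨(MonoidAlgebra.coeffLinearEquiv ℚ).symm y, ?_⟩
    show (MonoidAlgebra.coeffLinearEquiv ℚ).symm (f1 g ((MonoidAlgebra.coeffLinearEquiv ℚ)
      ((MonoidAlgebra.coeffLinearEquiv ℚ).symm y))) = x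
    rw [LinearEquiv.apply_symm_apply, hy]
    rfl

end RepLevel

section Resolution

def Kx (G : Type) [Group G] : ℕ → Rep ℚ G
  | 0 => Rep.ofMulAction ℚ G G
  | 1 => Rep.ofMulAction ℚ G G
  | _ + 2 => 0

def Kd : ∀ n : ℕ, Kx G (n + 1) ⟶ Kx G n
  | 0 => φ g
  | n + 1 => 0

def K : ChainComplex (Rep ℚ G) ℕ :=
  ChainComplex.of (Kx G) (Kd g) (by
    rintro (_ | n)
    · show (0 : Kx G 2 ⟶ Kx G 1) ≫ φ g = 0
      exact zero_comp
    · show (0 : _ ⟶ _) ≫ _ = 0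
      simp)

lemma K_d10 : (K g).d 1 0 = φ g := ChainComplex.of_d (Kx G) (Kd g) 0

lemma K_d21 : (K g).d 2 1 = 0 := ChainComplex.of_d (Kx G) (Kd g) 1

def Kπ : K g ⟶ (ChainComplex.single₀ (Rep ℚ G)).obj
    (Rep.ofMulAction ℚ G (G ⧸ Subgroup.zpowers g)) :=
  (ChainComplex.toSingle₀Equiv _ _).symm ⟨π0 g, by rw [K_d10]; exact φ_π0_zero g⟩

lemma Kπ_f0 : (Kπ g).f 0 = π0 g := ChainComplex.toSingle₀Equiv_symm_apply_f_zero _ _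

def projRes (hord : ¬ IsOfFinOrder g) :
    ProjectiveResolution (Rep.ofMulAction ℚ G (G ⧸ Subgroup.zpowers g)) where
  complex := K g
  projective n := by
    match n with
    | 0 => exact leftRegular_projective
    | 1 => exact leftRegular_projective
    | n + 2 => exact zero_projective
  π := Kπ g
  quasiIso := by
    constructor
    rintro (_ | _ | n)
    · rw [quasiIsoAt_iff' _ 1 0 0 (by simp) (by simp)]
      rw [ShortComplex.quasiIso_iff_of_zeros']
      rotate_left
      · exact (K g).shape 0 0 (by simp)
      · simp
        rfl
      · simp
        rfl
      constructor
      · refine (ShortComplex.exact_iff_of_iso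
          (ShortComplex.isoMk (Iso.refl _) (Iso.refl _) (Iso.refl _)
            ?_ ?_)).1 (exact_φ_π0 g)
        · show 𝟙 _ ≫ (K g).d 1 0 = φ g ≫ 𝟙 _
          simp [K_d10]
          exact Category.id_comp _
        · show 𝟙 _ ≫ (Kπ g).f 0 = π0 g ≫ 𝟙 _
          simp [Kπ_f0]
          exact Category.id_comp _
      · show Epi ((Kπ g).f 0)
        rw [Kπ_f0]
        exact epi_π0 g
    · rw [quasiIsoAt_iff_exactAt' (Kπ g) 1 (ChainComplex.exactAt_succ_single_obj _ _)]
      rw [HomologicalComplex.exactAt_iff' _ 2 1 0 (by simp) (by simp)]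
      refine (ShortComplex.exact_iff_mono _ ?_).2 ?_
      · exact K_d21 g
      · show Mono ((K g).d 1 0)
        rw [K_d10]
        exact mono_φ g hord
    · rw [quasiIsoAt_iff_exactAt' (Kπ g) (n + 2) (ChainComplex.exactAt_succ_single_obj _ _)]
      rw [HomologicalComplex.exactAt_iff' _ (n + 3) (n + 2) (n + 1) (by simp) (by simp)]
      exact ShortComplex.exact_of_isZero_X₂ _ (isZero_zero _)

end Resolution

section Final

lemma isZero_homology_aux (W : Rep ℚ G) (n : ℕ) :
    IsZero (((K g).linearYonedaObj ℚ W).homology (n + 2)) := by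
  rw [← HomologicalComplex.exactAt_iff_isZero_homology]
  rw [HomologicalComplex.exactAt_iff' _ (n + 1) (n + 2) (n + 3) (by simp) (by simp)]
  refine ShortComplex.exact_of_isZero_X₂ _ ?_
  have hz : IsZero ((K g).X (n + 2)) := isZero_zero _
  have hsub : Subsingleton ((K g).X (n + 2) ⟶ W) := ⟨fun a b => hz.eq_of_src a b⟩
  exact @ModuleCat.isZero_of_subsingleton ℚ _
    (ModuleCat.of ℚ ((K g).X (n + 2) ⟶ W)) hsub

lemma isZero_ext_Q (hord : ¬ IsOfFinOrder g) (W : Rep ℚ G) (q : ℕ) (hq : 2 ≤ q) :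
    IsZero (((Ext ℚ (Rep ℚ G) q).obj
      (Opposite.op (Rep.ofMulAction ℚ G (G ⧸ Subgroup.zpowers g)))).obj W) := by
  obtain ⟨n, rfl⟩ : ∃ n, q = n + 2 := ⟨q - 2, by omega⟩
  exact (isZero_homology_aux g W n).of_iso ((projRes g hord).isoExt (n + 2) W)

lemma isZero_ext_triv [Fintype (G ⧸ Subgroup.zpowers g)] (hord : ¬ IsOfFinOrder g)
    (W : Rep ℚ G) (q : ℕ) (hq : 2 ≤ q) :
    IsZero (((Ext ℚ (Rep ℚ G) q).obj (Opposite.op (Rep.trivial ℚ G ℚ))).obj W) := by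
  have h0 := isZero_ext_Q g hord W q hq
  set F := Ext ℚ (Rep ℚ G) q with hF
  rw [IsZero.iff_id_eq_zero]
  have key : (F.map (σr g).op ≫ F.map (ιr g).op).app W
      = 𝟙 ((F.obj (Opposite.op (Rep.trivial ℚ G ℚ))).obj W) := by
    rw [← F.map_comp, ← op_comp, ισ g, op_id, F.map_id]
    rfl
  have hzero : (F.map (σr g).op).app W = 0 := h0.eq_of_tgt _ _
  rw [← key, NatTrans.comp_app, hzero, zero_comp]

end Final

end Stmt0Proof

open CategoryTheory CategoryTheory.Limits in
/-- If a group `G` has a central element `g` of infinite order generating a subgroup of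
finite index, then for every representation `W` of `G` over `ℚ` and every `q ≥ 2`,
the group cohomology `H^q(G, W)` vanishes. -/
theorem stmt0 {G : Type} [Group G] (g : G) (hg : g ∈ Subgroup.center G)
    (hord : ¬ IsOfFinOrder g) (hfi : (Subgroup.zpowers g).FiniteIndex)
    (W : Rep ℚ G) (q : ℕ) (hq : 2 ≤ q) :
    Subsingleton (groupCohomology W q) := by
  haveI := hfi
  letI : Fintype (G ⧸ Subgroup.zpowers g) := Fintype.ofFinite _
  have hz : IsZero (groupCohomology W q) :=
    (Stmt0Proof.isZero_ext_triv g hord W q hq).of_iso (groupCohomologyIsoExt W q)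
  have hid : 𝟙 (groupCohomology W q) = 0 := (IsZero.iff_id_eq_zero _).1 hz
  refine ⟨fun a b => ?_⟩
  have ha : a = (0 : groupCohomology W q ⟶ groupCohomology W q) a := by
    conv_lhs => rw [show a = 𝟙 (groupCohomology W q) a from rfl, hid]
  have hb : b = (0 : groupCohomology W q ⟶ groupCohomology W q) b := by
    conv_lhs => rw [show b = 𝟙 (groupCohomology W q) b from rfl, hid]
  rw [ha, hb]
  rfl
end
end

section
/- Let G be a group containing a central element g of infinite order such that the cyclic subgroup ⟨g⟩ generated by g has finite index in G, and let W be a finite-dimensional representation of G over ℚ with action map ρ. Then dim_ℚ H^1(G, W) ≤ dim_ℚ (W ⧸ range(ρ(g) − id)), i.e. the first group cohomology of G with coefficients in W has dimension at most that of the space of g-coinvariants W_g = W/(ρ(g) − 1)W. -/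
open groupCohomology

section aux

variable {G : Type} [Group G] (g : G)

/-- Key lemma: a 1-cocycle whose value at `g` (where `zpowers g` has finite index)
lies in `(ρ g - 1) W` is a coboundary. -/
theorem key_lemma (hfi : (Subgroup.zpowers g).FiniteIndex) (W : Rep ℚ G) (f : cocycles₁ W)
    (hf : (f : G → W) g ∈ LinearMap.range (W.ρ g - LinearMap.id)) :
    (f : G → W) ∈ coboundaries₁ W := by
  obtain ⟨w₀, hw₀⟩ := hf
  set f' : G → W := (f : G → W) - (d₀₁ W).hom w₀ with hf'
  have hf'cocycle : f' ∈ cocycles₁ W :=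
    Submodule.sub_mem _ f.2 (d₀₁_apply_mem_cocycles₁ w₀)
  set F : cocycles₁ W := ⟨f', hf'cocycle⟩ with hF
  have hmul : ∀ x y : G, F (x * y) = W.ρ x (F y) + F x := fun x y =>
    ((mem_cocycles₁_iff (F : G → W)).1 F.2 x y)
  have hFg : F g = 0 := by
    show (f : G → W) g - (d₀₁ W).hom w₀ g = 0
    rw [d₀₁_hom_apply, ← hw₀]
    simp [sub_eq_zero]
  have hpow : ∀ n : ℤ, F (g ^ n) = 0 := by
    have hnat : ∀ n : ℕ, F (g ^ n) = 0 := by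
      intro n
      induction n with
      | zero => simpa using cocycles₁_map_one F
      | succ n ih => rw [pow_succ, hmul, ih, hFg]; simp
    intro n
    induction n using Int.rec with
    | ofNat n => simpa using hnat n
    | negSucc n =>
        rw [zpow_negSucc]
        have h := cocycles₁_map_inv F (g ^ (n + 1))
        rw [hnat (n + 1), neg_zero] at h
        calc F ((g ^ (n + 1))⁻¹)
            = W.ρ (g ^ (n + 1))⁻¹ (W.ρ (g ^ (n + 1)) (F ((g ^ (n + 1))⁻¹))) :=
              (Representation.inv_self_apply W.ρ _ _).symm
          _ = 0 := by rw [h, map_zero]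
  have hcoset : ∀ (y x : G), x ∈ Subgroup.zpowers g → F (y * x) = F y := by
    rintro y x ⟨n, rfl⟩
    rw [hmul, hpow]; simp
  have hconst : ∀ y y' : G,
      (y : G ⧸ Subgroup.zpowers g) = (y' : G ⧸ Subgroup.zpowers g) → F y = F y' := by
    intro y y' h
    have hx : y⁻¹ * y' ∈ Subgroup.zpowers g := (QuotientGroup.eq).1 h
    have := hcoset y (y⁻¹ * y') hx
    rw [mul_inv_cancel_left] at this
    exact this.symm
  haveI := hfi
  haveI : Finite (G ⧸ Subgroup.zpowers g) := Subgroup.finite_quotient_of_finiteIndex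
  haveI : Fintype (G ⧸ Subgroup.zpowers g) := Fintype.ofFinite _
  set N : ℕ := Fintype.card (G ⧸ Subgroup.zpowers g) with hN
  have hN0 : (N : ℚ) ≠ 0 := Nat.cast_ne_zero.2 Fintype.card_ne_zero
  set S : W := ∑ q : G ⧸ Subgroup.zpowers g, F q.out with hS
  have hsum : ∀ x : G, S = W.ρ x S + (N : ℚ) • F x := by
    intro x
    have h1 : ∀ q : G ⧸ Subgroup.zpowers g, F (x * q.out) = F ((x • q).out) := by
      intro q
      apply hconst
      rw [QuotientGroup.out_eq']
      exact MulAction.Quotient.mk_smul_out _ x q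
    have h2 : (∑ q : G ⧸ Subgroup.zpowers g, F (x * q.out)) = S :=
      Fintype.sum_bijective (x • ·) (MulAction.bijective x) _ _ h1
    calc S = ∑ q : G ⧸ Subgroup.zpowers g, F (x * q.out) := h2.symm
      _ = ∑ q : G ⧸ Subgroup.zpowers g, (W.ρ x (F q.out) + F x) :=
            Finset.sum_congr rfl fun q _ => hmul x q.out
      _ = W.ρ x S + (N : ℚ) • F x := by
            rw [Finset.sum_add_distrib, Finset.sum_const, ← map_sum, ← hS]
            simp [hN, Nat.cast_smul_eq_nsmul]
  set w : W := (N : ℚ)⁻¹ • S with hw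
  have hFx : ∀ x : G, W.ρ x (-w) - (-w) = F x := by
    intro x
    have h3 : (N : ℚ) • F x = S - W.ρ x S :=
      eq_sub_iff_add_eq.2 (by rw [add_comm]; exact (hsum x).symm)
    have h4 : F x = (N : ℚ)⁻¹ • (S - W.ρ x S) := by
      rw [← h3, smul_smul, inv_mul_cancel₀ hN0, one_smul]
    rw [h4, hw, map_neg, map_smul, smul_sub]
    abel
  refine ⟨w₀ + -w, funext fun h => ?_⟩
  rw [d₀₁_hom_apply]
  have hFh : F h = (f : G → W) h - (W.ρ h w₀ - w₀) := by
    show (f : G → W) h - (d₀₁ W).hom w₀ h = _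
    rw [d₀₁_hom_apply]
  have hx := hFx h
  have hgoal : W.ρ h w₀ + W.ρ h (-w) - (w₀ + -w) =
      (W.ρ h (-w) - -w) + (W.ρ h w₀ - w₀) := by abel
  rw [map_add, hgoal, hx, hFh]
  abel

end aux

/-- If a group `G` has a central element `g` of infinite order generating a subgroup of
finite index, and `W` is a finite-dimensional representation of `G` over `ℚ`, then
`dim H^1(G, W) ≤ dim (W / im(ρ(g) - id))`, the dimension of the `g`-coinvariants. -/
theorem stmt1 {G : Type} [Group G] (g : G) (hg : g ∈ Subgroup.center G)
    (hord : ¬ IsOfFinOrder g) (hfi : (Subgroup.zpowers g).FiniteIndex)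
    (W : Rep ℚ G) [FiniteDimensional ℚ W] :
    Module.finrank ℚ (groupCohomology W 1) ≤
      Module.finrank ℚ (W ⧸ LinearMap.range (W.ρ g - LinearMap.id)) := by
  set R := LinearMap.range (W.ρ g - LinearMap.id) with hR
  set φ : cocycles₁ W →ₗ[ℚ] W ⧸ R :=
    R.mkQ ∘ₗ (LinearMap.proj (φ := fun _ : G => (W : Type)) g) ∘ₗ (cocycles₁ W).subtype with hφ
  have hle : LinearMap.ker (H1π W).hom ≤ LinearMap.ker φ := by
    rintro f hf
    obtain ⟨x, hx⟩ := (H1π_eq_zero_iff f).1 hf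
    have : (f : G → W) g ∈ R := ⟨x, by simpa using congrFun hx g⟩
    simpa [hφ, LinearMap.mem_ker, Submodule.Quotient.mk_eq_zero] using this
  set ψ : (cocycles₁ W ⧸ LinearMap.ker (H1π W).hom) →ₗ[ℚ] W ⧸ R := Submodule.liftQ _ φ hle with hψ
  have hinj : Function.Injective ψ := by
    rw [← LinearMap.ker_eq_bot, hψ, Submodule.ker_liftQ_eq_bot]
    intro f hf
    refine (H1π_eq_zero_iff f).2 (key_lemma g hfi W f ?_)
    simpa [hR, hφ, LinearMap.mem_ker, Submodule.Quotient.mk_eq_zero] using hf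
  have hsurj : Function.Surjective (H1π W).hom := (ModuleCat.epi_iff_surjective _).1 inferInstance
  have heq : Module.finrank ℚ (groupCohomology W 1) =
      Module.finrank ℚ (cocycles₁ W ⧸ LinearMap.ker (H1π W).hom) :=
    (LinearMap.quotKerEquivOfSurjective _ hsurj).finrank_eq.symm
  rw [heq]
  exact LinearMap.finrank_le_finrank_of_injective hinj
end

section
/- For n ≥ 1 and a : Fin n → ℕ with a i ≥ 2 for all i, let λ : Fin n → ℂ satisfy 0 < ‖λ i‖ < 1 for every i. The ℂ-algebra endomorphism of MvPolynomial (Fin n) ℂ sending X i to λ i • X i maps the Jacobian ideal J(f) of the Pham–Brieskorn polynomial f = ∑ i, X i ^ (a i) into itself and hence induces a ℂ-linear endomorphism σ of the Milnor algebra M_f; the fixed subspace {x ∈ M_f | σ x = x} is exactly the one-dimensional subspace ℂ·1 spanned by the residue class of 1. -/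
open MvPolynomial Finsupp

lemma aeval_smulX_monomial {n : ℕ} (lam : Fin n → ℂ) (d : Fin n →₀ ℕ) (c : ℂ) :
    aeval (fun i => lam i • X i) (monomial d c) =
      monomial d ((d.prod fun i k => lam i ^ k) * c) := by
  rw [aeval_monomial]
  have : (d.prod fun i k => (lam i • X i) ^ k) =
      C (d.prod fun i k => lam i ^ k) * d.prod fun i k => (X i : MvPolynomial (Fin n) ℂ) ^ k := by
    rw [Finsupp.prod, Finsupp.prod, Finsupp.prod, map_prod, ← Finset.prod_mul_distrib]
    refine Finset.prod_congr rfl fun i _ => ?_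
    rw [smul_pow, smul_eq_C_mul]
  rw [this, monomial_eq, algebraMap_eq, map_mul]
  ring

lemma coeff_aeval_smulX {n : ℕ} (lam : Fin n → ℂ) (p : MvPolynomial (Fin n) ℂ) (d : Fin n →₀ ℕ) :
    coeff d (aeval (fun i => lam i • X i) p) = (d.prod fun i k => lam i ^ k) * coeff d p := by
  conv_lhs => rw [← p.support_sum_monomial_coeff]
  rw [map_sum, coeff_sum]
  simp_rw [aeval_smulX_monomial, coeff_monomial]
  rw [Finset.sum_ite_eq' p.support d (fun e => (e.prod fun i k => lam i ^ k) * coeff e p)]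
  by_cases hd : d ∈ p.support
  · simp [hd]
  · simp [hd, MvPolynomial.notMem_support_iff.mp hd]

lemma norm_mu_lt_one {n : ℕ} (lam : Fin n → ℂ) (hlam : ∀ i, 0 < ‖lam i‖ ∧ ‖lam i‖ < 1)
    (d : Fin n →₀ ℕ) (hd : d ≠ 0) : ‖d.prod fun i k => lam i ^ k‖ < 1 := by
  obtain ⟨i0, hi0⟩ := Finsupp.support_nonempty_iff.mpr hd
  have hkey : ∀ i, ‖lam i‖ ^ d i ≤ 1 :=
    fun i => pow_le_one₀ (norm_nonneg _) (hlam i).2.le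
  rw [Finsupp.prod, norm_prod]
  simp_rw [norm_pow]
  calc (∏ i ∈ d.support, ‖lam i‖ ^ d i)
      = ‖lam i0‖ ^ d i0 * ∏ i ∈ d.support.erase i0, ‖lam i‖ ^ d i :=
        (Finset.mul_prod_erase _ _ hi0).symm
    _ ≤ ‖lam i0‖ ^ d i0 * 1 := by
        refine mul_le_mul_of_nonneg_left ?_ (by positivity)
        exact Finset.prod_le_one (fun i _ => by positivity) (fun i _ => hkey i)
    _ < 1 := by
        rw [mul_one]
        exact pow_lt_one₀ (norm_nonneg _) (hlam i0).2 (Finsupp.mem_support_iff.mp hi0)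

/-- Let `f = ∑ i, X i ^ a i` be the Pham–Brieskorn polynomial (`n ≥ 1`, `a i ≥ 2`),
`J` its Jacobian ideal, and `lam i` complex numbers with `0 < ‖lam i‖ < 1`.
The `ℂ`-algebra endomorphism `φ` of `MvPolynomial (Fin n) ℂ` sending `X i` to
`lam i • X i` maps `J` into itself, and for any linear endomorphism `σ` of the Milnor
algebra `M_f = MvPolynomial (Fin n) ℂ ⧸ J` induced by `φ` (i.e. commuting with the
quotient map), the fixed subspace of `σ` is exactly `ℂ · 1`. -/
theorem stmt4 (n : ℕ) (hn : 1 ≤ n) (a : Fin n → ℕ) (ha : ∀ i, 2 ≤ a i)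
    (lam : Fin n → ℂ) (hlam : ∀ i, 0 < ‖lam i‖ ∧ ‖lam i‖ < 1)
    (f : MvPolynomial (Fin n) ℂ) (hf : f = ∑ i, MvPolynomial.X i ^ a i)
    (J : Ideal (MvPolynomial (Fin n) ℂ))
    (hJ : J = Ideal.span (Set.range fun i => MvPolynomial.pderiv i f))
    (φ : MvPolynomial (Fin n) ℂ →ₐ[ℂ] MvPolynomial (Fin n) ℂ)
    (hφ : φ = MvPolynomial.aeval fun i => lam i • MvPolynomial.X i) :
    (∀ p ∈ J, φ p ∈ J) ∧
    ∀ σ : (MvPolynomial (Fin n) ℂ ⧸ J) →ₗ[ℂ] (MvPolynomial (Fin n) ℂ ⧸ J),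
      (∀ p : MvPolynomial (Fin n) ℂ,
        σ (Ideal.Quotient.mk J p) = Ideal.Quotient.mk J (φ p)) →
      {x : MvPolynomial (Fin n) ℂ ⧸ J | σ x = x} =
        ↑(Submodule.span ℂ {(1 : MvPolynomial (Fin n) ℂ ⧸ J)}) := by
  classical
  set μ : (Fin n →₀ ℕ) → ℂ := fun d => d.prod fun i k => lam i ^ k with hμ
  have hcoeff : ∀ (p : MvPolynomial (Fin n) ℂ) d, coeff d (φ p) = μ d * coeff d p := by
    intro p d
    rw [hφ]
    exact coeff_aeval_smulX lam p d
  -- compute the generators of J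
  have hgen : ∀ i, pderiv i f = C (a i : ℂ) * X i ^ (a i - 1) := by
    intro i
    rw [hf, map_sum, Finset.sum_eq_single i]
    · rw [pderiv_pow, pderiv_X_self, mul_one, ← C_eq_coe_nat]
    · intro j _ hj
      rw [pderiv_pow, pderiv_X_of_ne hj, mul_zero]
    · simp
  have hane : ∀ i, (a i : ℂ) ≠ 0 := fun i => Nat.cast_ne_zero.mpr (by have := ha i; omega)
  -- J is the monomial ideal generated by the X i ^ (a i - 1)
  have hJ' : J = Ideal.span ((fun s => monomial s (1 : ℂ)) ''
      Set.range fun i => Finsupp.single i (a i - 1)) := by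
    rw [hJ]
    apply le_antisymm <;> rw [Ideal.span_le]
    · rintro _ ⟨i, rfl⟩
      show pderiv i f ∈ _
      rw [hgen i, X_pow_eq_monomial]
      exact Ideal.mul_mem_left _ _ (Ideal.subset_span ⟨_, ⟨i, rfl⟩, rfl⟩)
    · rintro _ ⟨_, ⟨i, rfl⟩, rfl⟩
      show monomial (Finsupp.single i (a i - 1)) (1 : ℂ) ∈ _
      have : (monomial (Finsupp.single i (a i - 1)) (1 : ℂ)) =
          C (a i : ℂ)⁻¹ * pderiv i f := by
        rw [hgen i, ← mul_assoc, ← C_mul, inv_mul_cancel₀ (hane i), C_1, one_mul,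
          X_pow_eq_monomial]
      rw [this]
      exact Ideal.mul_mem_left _ _ (Ideal.subset_span ⟨i, rfl⟩)
  have hmem : ∀ p : MvPolynomial (Fin n) ℂ,
      p ∈ J ↔ ∀ d ∈ p.support, ∃ i, a i - 1 ≤ d i := by
    intro p
    rw [hJ', mem_ideal_span_monomial_image]
    constructor
    · rintro h d hd
      obtain ⟨_, ⟨i, rfl⟩, hle⟩ := h d hd
      exact ⟨i, Finsupp.single_le_iff.mp hle⟩
    · rintro h d hd
      obtain ⟨i, hi⟩ := h d hd
      exact ⟨_, ⟨i, rfl⟩, Finsupp.single_le_iff.mpr hi⟩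
  have part1 : ∀ p ∈ J, φ p ∈ J := by
    intro p hp
    rw [hmem] at hp ⊢
    intro d hd
    apply hp
    rw [MvPolynomial.mem_support_iff] at hd ⊢
    intro h0
    exact hd (by rw [hcoeff, h0, mul_zero])
  refine ⟨part1, fun σ hσ => ?_⟩
  have hone : ∀ c : ℂ, c • (1 : MvPolynomial (Fin n) ℂ ⧸ J) = Ideal.Quotient.mk J (C c) := by
    intro c
    rw [show (1 : MvPolynomial (Fin n) ℂ ⧸ J) = Ideal.Quotient.mkₐ ℂ J 1 from rfl,
      ← map_smul, smul_eq_C_mul, mul_one, Ideal.Quotient.mkₐ_eq_mk]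
  ext x
  simp only [Set.mem_setOf_eq, SetLike.mem_coe, Submodule.mem_span_singleton]
  constructor
  · intro hx
    obtain ⟨p, rfl⟩ := Ideal.Quotient.mk_surjective x
    set P : (Fin n →₀ ℕ) → Prop := fun d => ∀ i, d i < a i - 1 with hP
    set p' : MvPolynomial (Fin n) ℂ :=
      ∑ d ∈ p.support.filter P, monomial d (coeff d p) with hp'
    have hc' : ∀ d, coeff d p' = if P d then coeff d p else 0 := by
      intro d
      rw [hp', coeff_sum]
      simp_rw [coeff_monomial]
      rw [Finset.sum_ite_eq' _ d (fun e => coeff e p)]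
      by_cases h1 : P d
      · by_cases h2 : d ∈ p.support
        · simp [h1, h2]
        · simp [h1, h2, MvPolynomial.notMem_support_iff.mp h2]
      · simp [h1]
    have h1 : Ideal.Quotient.mk J p = Ideal.Quotient.mk J p' := by
      rw [Ideal.Quotient.eq, hmem]
      intro d hd
      rw [MvPolynomial.mem_support_iff, coeff_sub, hc'] at hd
      by_cases h : P d
      · rw [if_pos h, sub_self] at hd
        exact absurd rfl hd
      · simp only [hP, not_forall, not_lt] at h
        obtain ⟨i, hi⟩ := h
        exact ⟨i, hi⟩
    have h2 : φ p' = p' := by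
      have hJmem : φ p' - p' ∈ J := by
        rw [← Ideal.Quotient.eq, ← hσ p', ← h1, hx, h1]
      rw [hmem] at hJmem
      rw [← sub_eq_zero]
      by_contra hne
      obtain ⟨d, hd⟩ := MvPolynomial.ne_zero_iff.mp hne
      have hds : d ∈ (φ p' - p').support := MvPolynomial.mem_support_iff.mpr hd
      obtain ⟨i, hi⟩ := hJmem d hds
      rw [coeff_sub, hcoeff] at hd
      have hcne : coeff d p' ≠ 0 := fun h => hd (by rw [h, mul_zero, sub_zero])
      rw [hc'] at hcne
      by_cases h : P d
      · exact absurd hi (not_le.mpr (h i))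
      · simp [h] at hcne
    have h3 : ∀ d, d ≠ 0 → coeff d p' = 0 := by
      intro d hd0
      have heq := congrArg (coeff d) h2
      rw [hcoeff] at heq
      have hfac : (μ d - 1) * coeff d p' = 0 := by rw [sub_mul, one_mul, heq, sub_self]
      rcases mul_eq_zero.mp hfac with h | h
      · exfalso
        have hlt : ‖μ d‖ < 1 := norm_mu_lt_one lam hlam d hd0
        rw [sub_eq_zero] at h
        rw [h, norm_one] at hlt
        exact lt_irrefl _ hlt
      · exact h
    have h4 : p' = C (coeff 0 p') := by
      apply MvPolynomial.ext
      intro d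
      by_cases hd : d = 0
      · subst hd; simp [coeff_C]
      · rw [h3 d hd, coeff_C, if_neg (Ne.symm hd)]
    exact ⟨coeff 0 p', by rw [hone, h1]; exact congrArg _ h4.symm⟩
  · rintro ⟨c, rfl⟩
    have h1 : σ 1 = 1 := by
      rw [show (1 : MvPolynomial (Fin n) ℂ ⧸ J) = Ideal.Quotient.mk J 1 from rfl, hσ, map_one]
    rw [map_smul, h1]
end

section
/- For n ≥ 1 let λ : Fin n → ℂ satisfy 0 < ‖λ i‖ < 1 for every i, and let T be the diagonal linear automorphism of ℂ^n with (T z) i = λ i * z i. Then the action of ℤ on ℂ^n ∖ {0} generated by T is properly discontinuous: for all compact subsets K, L of ℂ^n ∖ {0}, the set {k ∈ ℤ | T^k(K) ∩ L ≠ ∅} is finite. -/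
/-- For `n ≥ 1` and `lam i : ℂ` with `0 < ‖lam i‖ < 1`, the `ℤ`-action on `ℂ^n ∖ {0}`
generated by the diagonal automorphism `T z = fun i => lam i * z i` is properly
discontinuous: for all compact subsets `K, L` of `ℂ^n ∖ {0}`, the set of integers `k`
with `T^k(K) ∩ L ≠ ∅` is finite. -/
theorem stmt6 (n : ℕ) (hn : 1 ≤ n) (lam : Fin n → ℂ)
    (hlam : ∀ i, 0 < ‖lam i‖ ∧ ‖lam i‖ < 1)
    (T : Equiv.Perm (Fin n → ℂ)) (hT : ∀ z i, T z i = lam i * z i)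
    (K L : Set (Fin n → ℂ)) (hK : IsCompact K) (hL : IsCompact L)
    (hK0 : (0 : Fin n → ℂ) ∉ K) (hL0 : (0 : Fin n → ℂ) ∉ L) :
    {k : ℤ | ((T ^ k) '' K ∩ L).Nonempty}.Finite := by
  have hne : ∀ i, lam i ≠ 0 := fun i => norm_pos_iff.mp (hlam i).1
  -- inverse formula
  have hTinv : ∀ z i, T⁻¹ z i = (lam i)⁻¹ * z i := by
    intro z i
    have h := hT (T⁻¹ z) i
    rw [show T (T⁻¹ z) = z from T.apply_symm_apply z] at h
    field_simp [hne i, h]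
    linear_combination -h
  -- power formula
  have hpow : ∀ (k : ℤ) (z : Fin n → ℂ) (i : Fin n), (T ^ k) z i = lam i ^ k * z i := by
    intro k
    induction k using Int.induction_on with
    | zero => intro z i; simp
    | succ m ih =>
      intro z i
      have h1 : T ^ ((m : ℤ) + 1) = T * T ^ (m : ℤ) := by
        rw [add_comm, zpow_add, zpow_one]
      rw [h1, Equiv.Perm.mul_apply, hT, ih, zpow_add_one₀ (hne i)]
      ring
    | pred m ih =>
      intro z i
      have h1 : T ^ (-(m : ℤ) - 1) = T⁻¹ * T ^ (-(m : ℤ)) := by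
        rw [sub_eq_neg_add, zpow_add, zpow_neg_one]
      rw [h1, Equiv.Perm.mul_apply, hTinv, ih, zpow_sub_one₀ (hne i)]
      ring
  -- maximal modulus μ
  obtain ⟨i0, -, hi0⟩ := Finset.exists_max_image Finset.univ (fun i => ‖lam i‖)
    ⟨⟨0, hn⟩, Finset.mem_univ _⟩
  set μ := ‖lam i0‖ with hμdef
  have hμ0 : 0 < μ := (hlam i0).1
  have hμ1 : μ < 1 := (hlam i0).2
  have hμi : ∀ i, ‖lam i‖ ≤ μ := fun i => hi0 i (Finset.mem_univ i)
  -- contraction bound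
  have hbound : ∀ (m : ℕ) (z : Fin n → ℂ), ‖(T ^ (m : ℤ)) z‖ ≤ μ ^ m * ‖z‖ := by
    intro m z
    rw [pi_norm_le_iff_of_nonneg (by positivity)]
    intro i
    rw [hpow, norm_mul]
    have h1 : ‖lam i ^ (m : ℤ)‖ = ‖lam i‖ ^ m := by
      rw [norm_zpow, zpow_natCast]
    rw [h1]
    exact mul_le_mul (pow_le_pow_left₀ (norm_nonneg _) (hμi i) m)
      (norm_le_pi_norm z i) (norm_nonneg _) (by positivity)
  -- trivial cases
  rcases K.eq_empty_or_nonempty with hKe | hKne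
  · simp [hKe]
  rcases L.eq_empty_or_nonempty with hLe | hLne
  · simp [hLe]
  -- bounds on K and L
  obtain ⟨zK, hzKmem, hminK⟩ := hK.exists_isMinOn hKne continuous_norm.continuousOn
  obtain ⟨zL, hzLmem, hminL⟩ := hL.exists_isMinOn hLne continuous_norm.continuousOn
  have hrK : 0 < ‖zK‖ := norm_pos_iff.mpr (fun h => hK0 (h ▸ hzKmem))
  have hrL : 0 < ‖zL‖ := norm_pos_iff.mpr (fun h => hL0 (h ▸ hzLmem))
  obtain ⟨CK, hCK⟩ := hK.exists_bound_of_continuousOn continuousOn_id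
  obtain ⟨CL, hCL⟩ := hL.exists_bound_of_continuousOn continuousOn_id
  have hCK0 : 0 < CK := lt_of_lt_of_le hrK (hCK zK hzKmem)
  have hCL0 : 0 < CL := lt_of_lt_of_le hrL (hCL zL hzLmem)
  -- choose N
  have hε : 0 < min (‖zL‖ / CK) (‖zK‖ / CL) := by positivity
  obtain ⟨N, hN⟩ := ((tendsto_pow_atTop_nhds_zero_of_lt_one hμ0.le hμ1).eventually
    (gt_mem_nhds hε)).exists
  have hμpow : ∀ m : ℕ, N ≤ m → μ ^ m < min (‖zL‖ / CK) (‖zK‖ / CL) := fun m hm =>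
    lt_of_le_of_lt (pow_le_pow_of_le_one hμ0.le hμ1.le hm) hN
  -- the set is contained in Icc
  apply (Set.finite_Icc (-(N : ℤ)) (N : ℤ)).subset
  rintro k ⟨w, ⟨z, hzK', rfl⟩, hwL⟩
  constructor
  · -- -(N) ≤ k
    by_contra h
    push_neg at h
    set m := (-k).toNat with hm
    have hmk : ((m : ℤ)) = -k := Int.toNat_of_nonneg (by omega)
    have hNm : N ≤ m := by omega
    have hz : (T ^ ((m : ℤ))) ((T ^ k) z) = z := by
      rw [← Equiv.Perm.mul_apply, ← zpow_add, hmk]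
      simp
    have h1 : ‖z‖ ≤ μ ^ m * ‖(T ^ k) z‖ := by
      have := hbound m ((T ^ k) z); rwa [hz] at this
    have h2 : μ ^ m * ‖(T ^ k) z‖ ≤ μ ^ m * CL :=
      mul_le_mul_of_nonneg_left (hCL _ hwL) (by positivity)
    have h3 : μ ^ m < ‖zK‖ / CL := lt_of_lt_of_le (hμpow m hNm) (min_le_right _ _)
    have h4 : μ ^ m * CL < ‖zK‖ := (lt_div_iff₀ hCL0).mp h3
    have h5 : ‖zK‖ ≤ ‖z‖ := hminK hzK'
    linarith
  · -- k ≤ N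
    by_contra h
    push_neg at h
    set m := k.toNat with hm
    have hmk : ((m : ℤ)) = k := Int.toNat_of_nonneg (by omega)
    have hNm : N ≤ m := by omega
    have h1 : ‖(T ^ k) z‖ ≤ μ ^ m * ‖z‖ := by
      rw [← hmk]; exact hbound m z
    have h2 : μ ^ m * ‖z‖ ≤ μ ^ m * CK :=
      mul_le_mul_of_nonneg_left (hCK z hzK') (by positivity)
    have h3 : μ ^ m < ‖zL‖ / CK := lt_of_lt_of_le (hμpow m hNm) (min_le_left _ _)
    have h4 : μ ^ m * CK < ‖zL‖ := (lt_div_iff₀ hCK0).mp h3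
    have h5 : ‖zL‖ ≤ ‖(T ^ k) z‖ := hminL hwL
    linarith
end

section
/- Let n ≥ 1, a : Fin n → ℕ with a i ≥ 2 for all i, and λ ∈ ℂ with 0 < ‖λ‖ < 1. Let λ' : Fin n → ℂ satisfy (λ' i)^(a i) = λ for each i (a choice of a i-th roots of λ), and let T be the diagonal linear automorphism of ℂ^n with (T z) i = λ' i * z i. Let V = {z : Fin n → ℂ | ∑ i, (z i)^(a i) = 0}. Then: (a) T maps V bijectively onto V (indeed (∑ i (T z) i^{a i}) = λ · ∑ i (z i)^{a i}); and (b) the quotient topological space of V ∖ {0} by the orbit equivalence relation z ∼ w ⟺ ∃ k ∈ ℤ, T^k z = w is compact. -/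
/-- Let `V = {z : ℂ^n | ∑ i, z i ^ a i = 0}` be the Pham–Brieskorn hypersurface
(`n ≥ 1`, `a i ≥ 2`), `lam : ℂ` with `0 < ‖lam‖ < 1`, and `lam' i` a choice of
`a i`-th roots of `lam`. The diagonal automorphism `T z = fun i => lam' i * z i`
satisfies `∑ i, (T z) i ^ a i = lam * ∑ i, z i ^ a i`, maps `V` bijectively onto
itself, and the quotient of `V ∖ {0}` by the orbit equivalence relation of the
`ℤ`-action generated by `T` is compact. -/
theorem stmt8 (n : ℕ) (hn : 1 ≤ n) (a : Fin n → ℕ) (ha : ∀ i, 2 ≤ a i)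
    (lam : ℂ) (hlam : 0 < ‖lam‖ ∧ ‖lam‖ < 1)
    (lam' : Fin n → ℂ) (hroot : ∀ i, lam' i ^ a i = lam)
    (T : Equiv.Perm (Fin n → ℂ)) (hT : ∀ z i, T z i = lam' i * z i)
    (V : Set (Fin n → ℂ)) (hV : V = {z : Fin n → ℂ | ∑ i, z i ^ a i = 0}) :
    (∀ z : Fin n → ℂ, ∑ i, (T z) i ^ a i = lam * ∑ i, z i ^ a i) ∧
    Set.BijOn T V V ∧
    CompactSpace (Quot (fun z w : {z : Fin n → ℂ // z ∈ V ∧ z ≠ 0} =>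
      ∃ k : ℤ, (T ^ k) z.val = w.val)) := by
  classical
  have hlam0 : lam ≠ 0 := by
    intro h; rw [h, norm_zero] at hlam; exact lt_irrefl 0 hlam.1
  have hl'0 : ∀ i, lam' i ≠ 0 := by
    intro i h
    rw [← hroot i, h, zero_pow (by have := ha i; omega)] at hlam0
    exact hlam0 rfl
  -- Part (a)
  have parta : ∀ z : Fin n → ℂ, ∑ i, (T z) i ^ a i = lam * ∑ i, z i ^ a i := by
    intro z
    rw [Finset.mul_sum]
    refine Finset.sum_congr rfl fun i _ => ?_
    rw [hT, mul_pow, hroot]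
  -- Part (b)
  have partb : Set.BijOn T V V := by
    refine ⟨fun z hz => ?_, fun z _ w _ h => T.injective h, fun w hw => ?_⟩
    · rw [hV] at *
      simp only [Set.mem_setOf_eq] at *
      rw [parta, hz, mul_zero]
    · refine ⟨T.symm w, ?_, T.apply_symm_apply w⟩
      rw [hV] at *
      simp only [Set.mem_setOf_eq] at *
      have := parta (T.symm w)
      rw [T.apply_symm_apply, hw] at this
      exact (mul_eq_zero.mp this.symm).resolve_left hlam0
  refine ⟨parta, partb, ?_⟩
  -- basic setup
  have hne : Nonempty (Fin n) := Fin.pos_iff_nonempty.mp hn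
  have huniv : (Finset.univ : Finset (Fin n)).Nonempty := Finset.univ_nonempty
  set m : ℝ := Finset.univ.inf' huniv (fun i => ‖lam' i‖) with hm
  set M : ℝ := Finset.univ.sup' huniv (fun i => ‖lam' i‖) with hM
  have hm0 : 0 < m := by
    rw [hm, Finset.lt_inf'_iff]
    exact fun i _ => norm_pos_iff.mpr (hl'0 i)
  have hl'lt : ∀ i, ‖lam' i‖ < 1 := by
    intro i
    by_contra h
    push_neg at h
    have : (1:ℝ) ≤ ‖lam‖ := by
      rw [← hroot i, norm_pow]
      exact one_le_pow₀ h
    exact absurd hlam.2 (not_lt.mpr this)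
  have hM1 : M < 1 := by
    rw [hM, Finset.sup'_lt_iff]
    exact fun i _ => hl'lt i
  have hM0 : 0 < M := lt_of_lt_of_le hm0 (by
    obtain ⟨i⟩ := hne
    exact le_trans (Finset.inf'_le _ (Finset.mem_univ i)) (Finset.le_sup' (fun i => ‖lam' i‖) (Finset.mem_univ i)))
  -- norm bounds for one step
  have hub : ∀ z : Fin n → ℂ, ‖T z‖ ≤ M * ‖z‖ := by
    intro z
    rw [pi_norm_le_iff_of_nonneg (mul_nonneg hM0.le (norm_nonneg z))]
    intro i
    rw [hT, norm_mul]
    exact mul_le_mul (Finset.le_sup' (fun i => ‖lam' i‖) (Finset.mem_univ i))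
      (norm_le_pi_norm z i) (norm_nonneg _) hM0.le
  have hlb : ∀ z : Fin n → ℂ, m * ‖z‖ ≤ ‖T z‖ := by
    intro z
    obtain ⟨j, hj⟩ := Finite.exists_max (fun i => ‖z i‖)
    have hzj : ‖z‖ = ‖z j‖ := le_antisymm
      (by rw [pi_norm_le_iff_of_nonneg (norm_nonneg _)]; exact hj)
      (norm_le_pi_norm z j)
    calc m * ‖z‖ = m * ‖z j‖ := by rw [hzj]
      _ ≤ ‖lam' j‖ * ‖z j‖ := mul_le_mul_of_nonneg_right
          (Finset.inf'_le _ (Finset.mem_univ j)) (norm_nonneg _)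
      _ = ‖(T z) j‖ := by rw [hT, norm_mul]
      _ ≤ ‖T z‖ := norm_le_pi_norm _ j
  -- zpow step
  have hstep : ∀ (k : ℤ) (z : Fin n → ℂ), (T ^ (k + 1)) z = T ((T ^ k) z) := by
    intro k z
    rw [add_comm, zpow_add, zpow_one]
    rfl
  -- coordinate formula for T^k
  have hZnat : ∀ (j : ℕ) (z : Fin n → ℂ), (T ^ j) z = fun i => lam' i ^ j * z i := by
    intro j
    induction j with
    | zero => intro z; funext i; simp
    | succ j ih =>
      intro z
      funext i
      rw [pow_succ, Equiv.Perm.mul_apply, ih]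
      show lam' i ^ j * T z i = lam' i ^ (j + 1) * z i
      rw [hT, pow_succ]
      ring
  have hZ : ∀ (k : ℤ) (z : Fin n → ℂ), (T ^ k) z = fun i => lam' i ^ k * z i := by
    intro k z
    cases k with
    | ofNat j =>
      rw [Int.ofNat_eq_coe, zpow_natCast, hZnat]
      funext i
      show lam' i ^ j * z i = lam' i ^ ((j : ℤ)) * z i
      rw [zpow_natCast]
    | negSucc j =>
      rw [zpow_negSucc]
      have : (T ^ (j + 1)) (fun i => lam' i ^ (Int.negSucc j) * z i) = z := by
        rw [hZnat]
        funext i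
        show lam' i ^ (j + 1) * (lam' i ^ (Int.negSucc j) * z i) = z i
        rw [← zpow_natCast (lam' i) (j + 1), ← mul_assoc, ← zpow_add₀ (hl'0 i)]
        have h2 : ((j + 1 : ℕ) : ℤ) + Int.negSucc j = 0 := by
          rw [Int.negSucc_eq]; push_cast; ring
        rw [h2, zpow_zero, one_mul]
      calc ((T ^ (j + 1))⁻¹) z
          = ((T ^ (j + 1))⁻¹) ((T ^ (j + 1)) fun i => lam' i ^ (Int.negSucc j) * z i) := by
            rw [this]
        _ = fun i => lam' i ^ (Int.negSucc j) * z i := by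
            rw [← Equiv.Perm.mul_apply, inv_mul_cancel, Equiv.Perm.one_apply]
  -- T^k maps V\{0} to itself
  have hVk : ∀ (k : ℤ) (z : Fin n → ℂ), z ∈ V → z ≠ 0 → (T ^ k) z ∈ V ∧ (T ^ k) z ≠ 0 := by
    intro k z hzV hz0
    rw [hV] at hzV ⊢
    simp only [Set.mem_setOf_eq] at hzV ⊢
    constructor
    · have : ∀ i, ((T ^ k) z) i ^ a i = lam ^ k * z i ^ a i := by
        intro i
        rw [hZ]
        show (lam' i ^ k * z i) ^ a i = lam ^ k * z i ^ a i
        rw [mul_pow, ← hroot i, ← zpow_natCast (lam' i ^ k) (a i), ← zpow_mul,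
          mul_comm k (a i : ℤ), zpow_mul, zpow_natCast]
      rw [Finset.sum_congr rfl (fun i _ => this i), ← Finset.mul_sum, hzV, mul_zero]
    · intro h
      apply hz0
      have h0 : (T ^ k) (0 : Fin n → ℂ) = 0 := by
        rw [hZ]; funext i; simp
      exact (T ^ k).injective (h.trans h0.symm)
  -- decay estimate
  have hdecay : ∀ (z : Fin n → ℂ) (k : ℤ) (j : ℕ), ‖(T ^ (k + j)) z‖ ≤ M ^ j * ‖(T ^ k) z‖ := by
    intro z k j
    induction j with
    | zero => simp
    | succ j ih =>
      have : (k + (j + 1 : ℕ) : ℤ) = (k + j) + 1 := by push_cast; ring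
      rw [this, hstep]
      calc ‖T ((T ^ (k + (j:ℤ))) z)‖ ≤ M * ‖(T ^ (k + (j:ℤ))) z‖ := hub _
        _ ≤ M * (M ^ j * ‖(T ^ k) z‖) := mul_le_mul_of_nonneg_left ih hM0.le
        _ = M ^ (j + 1) * ‖(T ^ k) z‖ := by ring
  -- the compact fundamental domain
  set K' : Set (Fin n → ℂ) :=
    {w | (∑ i, w i ^ a i = 0) ∧ m ≤ ‖w‖ ∧ ‖w‖ ≤ 1} with hK'
  have hK'sub : K' ⊆ {z | z ∈ V ∧ z ≠ 0} := by
    intro w hw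
    refine ⟨by rw [hV]; exact hw.1, fun h => ?_⟩
    have := hw.2.1
    rw [h, norm_zero] at this
    exact absurd (lt_of_lt_of_le hm0 this) (lt_irrefl 0)
  have hK'cpt : IsCompact K' := by
    have hclosed : IsClosed K' := by
      have h1 : IsClosed {w : Fin n → ℂ | ∑ i, w i ^ a i = 0} :=
        isClosed_eq (continuous_finset_sum _ fun i _ => (continuous_apply i).pow _)
          continuous_const
      have h2 : IsClosed {w : Fin n → ℂ | m ≤ ‖w‖} :=
        isClosed_le continuous_const continuous_norm
      have h3 : IsClosed {w : Fin n → ℂ | ‖w‖ ≤ 1} :=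
        isClosed_le continuous_norm continuous_const
      have : K' = {w : Fin n → ℂ | ∑ i, w i ^ a i = 0} ∩
          ({w : Fin n → ℂ | m ≤ ‖w‖} ∩ {w : Fin n → ℂ | ‖w‖ ≤ 1}) := by
        rw [hK']; ext x; simp [Set.mem_setOf_eq, and_assoc]
      rw [this]
      exact h1.inter (h2.inter h3)
    exact IsCompact.of_isClosed_subset (isCompact_closedBall (0 : Fin n → ℂ) 1) hclosed
      (fun w hw => by rw [Metric.mem_closedBall, dist_zero_right]; exact hw.2.2)
  -- lift compactness to the subtype
  set S := {z : Fin n → ℂ // z ∈ V ∧ z ≠ 0}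
  set K : Set S := Subtype.val ⁻¹' K' with hKdef
  have hKcpt : IsCompact K := by
    rw [Topology.IsEmbedding.isCompact_iff Topology.IsEmbedding.subtypeVal]
    rw [Set.image_preimage_eq_of_subset (by rw [Subtype.range_coe_subtype]; exact hK'sub)]
    exact hK'cpt
  -- every orbit meets K
  refine ⟨?_⟩
  set r : {z : Fin n → ℂ // z ∈ V ∧ z ≠ 0} → {z : Fin n → ℂ // z ∈ V ∧ z ≠ 0} → Prop :=
    fun z w => ∃ k : ℤ, (T ^ k) z.val = w.val with hr
  have hsurj : Set.univ ⊆ Quot.mk r '' K := by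
    rintro q -
    induction q using Quot.ind with
    | mk z =>
      have hz0 : (0:ℝ) < ‖z.val‖ := norm_pos_iff.mpr z.2.2
      obtain ⟨N, hN⟩ := exists_pow_lt_of_lt_one hz0 hM1
      -- ‖T^(-N) z‖ > 1
      have hu0 : 1 < ‖(T ^ (-(N:ℤ))) z.val‖ := by
        by_contra h
        push_neg at h
        have := hdecay z.val (-(N:ℤ)) N
        rw [show (-(N:ℤ) + N) = 0 by ring, zpow_zero, Equiv.Perm.one_apply] at this
        have : ‖z.val‖ ≤ M ^ N := le_trans this
          (by calc M ^ N * ‖(T ^ (-(N:ℤ))) z.val‖ ≤ M ^ N * 1 :=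
                mul_le_mul_of_nonneg_left h (pow_nonneg hM0.le N)
              _ = M ^ N := mul_one _)
        exact absurd hN (not_lt.mpr this)
      -- existence of j with norm ≤ 1
      have hc0 : (0:ℝ) < ‖(T ^ (-(N:ℤ))) z.val‖ := lt_trans one_pos hu0
      have hex : ∃ j : ℕ, ‖(T ^ (-(N:ℤ) + j)) z.val‖ ≤ 1 := by
        obtain ⟨j, hj⟩ := exists_pow_lt_of_lt_one (inv_pos.mpr hc0) hM1
        refine ⟨j, le_trans (hdecay z.val (-(N:ℤ)) j) ?_⟩
        rw [← inv_mul_cancel₀ hc0.ne']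
        exact mul_le_mul_of_nonneg_right hj.le hc0.le
      have hfind : ‖(T ^ (-(N:ℤ) + (Nat.find hex : ℕ))) z.val‖ ≤ 1 := Nat.find_spec hex
      have hj0ne : Nat.find hex ≠ 0 := by
        intro h
        rw [h] at hfind
        simp only [Nat.cast_zero, add_zero] at hfind
        exact absurd hu0 (not_lt.mpr hfind)
      obtain ⟨j1, hj1⟩ := Nat.exists_eq_succ_of_ne_zero hj0ne
      have hprev : 1 < ‖(T ^ (-(N:ℤ) + j1)) z.val‖ := by
        have := Nat.find_min hex (by rw [hj1]; exact Nat.lt_succ_self j1)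
        push_neg at this
        exact this
      obtain ⟨k, hkdef⟩ : ∃ k : ℤ, k = -(N:ℤ) + (Nat.find hex : ℕ) := ⟨_, rfl⟩
      obtain ⟨w, hwdef⟩ : ∃ w, w = (T ^ k) z.val := ⟨_, rfl⟩
      have hwstep : w = T ((T ^ (-(N:ℤ) + j1)) z.val) := by
        rw [hwdef, hkdef, hj1,
          show (-(N:ℤ) + ((j1 + 1 : ℕ) : ℤ)) = (-(N:ℤ) + j1) + 1 by push_cast; ring, hstep]
      have hwm : m ≤ ‖w‖ := by
        rw [hwstep]
        calc m = m * 1 := (mul_one m).symm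
          _ ≤ m * ‖(T ^ (-(N:ℤ) + j1)) z.val‖ :=
              mul_le_mul_of_nonneg_left hprev.le hm0.le
          _ ≤ _ := hlb _
      have hw1 : ‖w‖ ≤ 1 := by rw [hwdef, hkdef]; exact hfind
      have hwVk := hVk k z.val z.2.1 z.2.2
      have hwV : w ∈ V := by rw [hwdef]; exact hwVk.1
      have hw0 : w ≠ 0 := by rw [hwdef]; exact hwVk.2
      have hwsum : ∑ i, w i ^ a i = 0 := by
        have := hwV
        rw [hV] at this
        exact this
      have hwK' : w ∈ K' := ⟨hwsum, hwm, hw1⟩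
      refine ⟨⟨w, hwV, hw0⟩, hwK', ?_⟩
      exact (Quot.sound (⟨k, hwdef.symm⟩ : r z ⟨w, hwV, hw0⟩)).symm
  have huniv2 : Quot.mk r '' K = Set.univ := Set.univ_subset_iff.mp hsurj
  rw [← huniv2]
  exact hKcpt.image continuous_quot_mk
end

section
/- For n ≥ 1 let λ : Fin n → ℂ satisfy 0 < ‖λ i‖ < 1 for every i, and let T be the diagonal linear automorphism of ℂ^n with (T z) i = λ i * z i. If g : ℂ^n → ℂ is an entire (everywhere ℂ-differentiable) function with g ∘ T = g, then g is constant. -/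
/-- For `n ≥ 1` and `lam i : ℂ` with `0 < ‖lam i‖ < 1`, any entire function
`g : ℂ^n → ℂ` invariant under the diagonal contraction `T z = fun i => lam i * z i`
(i.e. `g ∘ T = g`) is constant. -/
theorem stmt9 (n : ℕ) (hn : 1 ≤ n) (lam : Fin n → ℂ)
    (hlam : ∀ i, 0 < ‖lam i‖ ∧ ‖lam i‖ < 1)
    (g : (Fin n → ℂ) → ℂ) (hg : Differentiable ℂ g)
    (hinv : g ∘ (fun z i => lam i * z i) = g) :
    ∃ c : ℂ, ∀ z, g z = c := by
  refine ⟨g 0, fun z => ?_⟩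
  -- the sequence λ^k • z
  set seq : ℕ → (Fin n → ℂ) := fun k i => lam i ^ k * z i with hseq
  have hgs : ∀ k, g (seq k) = g z := by
    intro k
    induction k with
    | zero => simp [hseq]
    | succ k ih =>
      have : seq (k + 1) = (fun z i => lam i * z i) (seq k) := by
        funext i; simp [hseq, pow_succ]; ring
      rw [this]
      have := congrFun hinv (seq k)
      simpa [Function.comp] using this.trans ih
  have hlim : Filter.Tendsto seq Filter.atTop (nhds 0) := by
    rw [tendsto_pi_nhds]
    intro i
    have h1 : Filter.Tendsto (fun k => lam i ^ k) Filter.atTop (nhds 0) :=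
      tendsto_pow_atTop_nhds_zero_of_norm_lt_one (hlam i).2
    simpa using h1.mul_const (z i)
  have := (hg.continuous.continuousAt.tendsto.comp hlim)
  have h2 : Filter.Tendsto (fun k : ℕ => g (seq k)) Filter.atTop (nhds (g 0)) := this
  have h3 : Filter.Tendsto (fun _ : ℕ => g z) Filter.atTop (nhds (g 0)) := by
    convert h2 using 2; exact (hgs _).symm
  exact tendsto_nhds_unique tendsto_const_nhds h3
end
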